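/- The epigraph of the Minkowski symmetral of a convex function equals the Minkowski symmetral of the epigraph: for ψ convex, proper, lower semicontinuous and coercive on ℝⁿ and H = u^⊥, epi(τ_H ψ) = ½ epi(ψ) + ½ R_{H×ℝ}(epi(ψ)). -/

import Mathlib

open RealInnerProductSpace Pointwise

/-- Reflection of a point about the hyperplane `u^⊥`. -/
noncomputable def reflHyp {n : ℕ} (u x : EuclideanSpace ℝ (Fin n)) :
    EuclideanSpace ℝ (Fin n) :=
  x - (2 * ⟪x, u⟫) • u

/-- Infimal convolution. -/
noncomputable def infConv {n : ℕ} (ψ φ : EuclideanSpace ℝ (Fin n) → EReal)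
    (x : EuclideanSpace ℝ (Fin n)) : EReal :=
  ⨅ y, ψ y + φ (x - y)

/-- Epi-multiplication. -/
noncomputable def epiMul {n : ℕ} (l : ℝ) (ψ : EuclideanSpace ℝ (Fin n) → EReal)
    (x : EuclideanSpace ℝ (Fin n)) : EReal :=
  ((l : EReal)) * ψ (l⁻¹ • x)

/-- The Minkowski symmetral of a convex function about `u^⊥`. -/
noncomputable def minkSymm {n : ℕ} (u : EuclideanSpace ℝ (Fin n))
    (ψ : EuclideanSpace ℝ (Fin n) → EReal) : EuclideanSpace ℝ (Fin n) → EReal :=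
  infConv (epiMul (1/2) ψ) (epiMul (1/2) (fun y => ψ (reflHyp u y)))

/-
The epigraph of an infimal convolution `f □ g` is `epi f + epi g` as soon as the infimum defining
`(f □ g) x` is attained for every `x`, and epi-multiplication by `l > 0` scales the epigraph by `l`.
For `f = ½ □ ψ` and `g = ½ □ (ψ ∘ R_H)` attainment holds because `y ↦ f y + g (x - y)` is lower
semicontinuous and tends to `+∞` at infinity, `f` being coercive and `g` bounded below. Finally
`epi (ψ ∘ R_H) = R_{H×ℝ} (epi ψ)` since `R_H` is an involution.
-/

open Filter Topology Set

theorem LowerSemicontinuous.exists_forall_le' {α β : Type*} [LinearOrder α] [TopologicalSpace β]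
    {f : β → α} (hf : LowerSemicontinuous f) (x₀ : β) (h : ∀ᶠ x in cocompact β, f x₀ ≤ f x) :
    ∃ x, ∀ y, f x ≤ f y := by
  obtain ⟨K, hK, hKf⟩ := mem_cocompact.mp h
  obtain ⟨x, -, hx⟩ := LowerSemicontinuousOn.exists_isMinOn (insert_nonempty x₀ K)
    (hK.insert x₀) (hf.lowerSemicontinuousOn _)
  refine ⟨x, fun y => ?_⟩
  by_cases hy : y ∈ K
  · exact hx (mem_insert_of_mem x₀ hy)
  · exact (hx (mem_insert x₀ K)).trans (hKf hy)

theorem LowerSemicontinuous.exists_forall_le_of_tendsto_top {α β : Type*} [LinearOrder α]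
    [OrderTop α] [TopologicalSpace α] [OrderTopology α] [TopologicalSpace β] [Nonempty β]
    {f : β → α} (hf : LowerSemicontinuous f) (h : Tendsto f (cocompact β) (𝓝 ⊤)) :
    ∃ x, ∀ y, f x ≤ f y := by
  by_cases htop : ∀ x, f x = ⊤
  · exact ⟨Classical.arbitrary β, fun y => (htop y).symm ▸ le_top⟩
  push Not at htop
  obtain ⟨x₀, hx₀⟩ := htop
  exact hf.exists_forall_le' x₀
    ((h.eventually (Ioi_mem_nhds (lt_top_iff_ne_top.2 hx₀))).mono fun _ => le_of_lt)

theorem LowerSemicontinuous.exists_forall_coe_le {β : Type*} [TopologicalSpace β] [Nonempty β]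
    {f : β → EReal} (hf : LowerSemicontinuous f) (hbot : ∀ x, f x ≠ ⊥)
    (htop : Tendsto f (cocompact β) (𝓝 ⊤)) : ∃ c : ℝ, ∀ x, (c : EReal) ≤ f x := by
  obtain ⟨x₀, hx₀⟩ := hf.exists_forall_le_of_tendsto_top htop
  exact ⟨(f x₀).toReal, fun x => (EReal.coe_toReal_le (hbot x₀)).trans (hx₀ x)⟩

theorem tendsto_cocompact_nhds_top_of_forall_norm_ge {E : Type*} [NormedAddCommGroup E]
    [ProperSpace E] {f : E → EReal}
    (hf : ∀ M : ℝ, ∃ r : ℝ, ∀ x, r ≤ ‖x‖ → (M : EReal) ≤ f x) :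
    Tendsto f (cocompact E) (𝓝 ⊤) := by
  refine EReal.tendsto_nhds_top_iff_real.2 fun M => ?_
  obtain ⟨r, hr⟩ := hf (M + 1)
  filter_upwards [tendsto_norm_cocompact_atTop.eventually_ge_atTop r] with x hx
  exact lt_of_lt_of_le (EReal.coe_lt_coe_iff.2 (lt_add_one M)) (hr x hx)

theorem EReal.coe_mul_le_coe_iff {l : ℝ} (hl : 0 < l) {a : EReal} {t : ℝ} :
    (l : EReal) * a ≤ t ↔ a ≤ ((l⁻¹ * t : ℝ) : EReal) := by
  rw [mul_comm, ← EReal.le_div_iff_mul_le (EReal.coe_pos.2 hl) (EReal.coe_ne_top l),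
    ← EReal.coe_div, div_eq_inv_mul]

theorem EReal.continuous_coe_mul {l : ℝ} (hl : l ≠ 0) :
    Continuous fun a : EReal => (l : EReal) * a :=
  continuous_iff_continuousAt.2 fun a => (EReal.continuousAt_mul (p := ((l : EReal), a))
    (Or.inl (by simpa using hl)) (Or.inl (by simpa using hl)) (Or.inl (EReal.coe_ne_bot l))
    (Or.inl (EReal.coe_ne_top l))).comp (continuous_const.prodMk continuous_id).continuousAt

def epi {α : Type*} (f : α → EReal) : Set (α × ℝ) := {p | f p.1 ≤ p.2}

theorem epi_comp_of_involutive {α : Type*} {R : α → α} (hR : Function.Involutive R)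
    (f : α → EReal) : epi (fun x => f (R x)) = (fun p : α × ℝ => (R p.1, p.2)) '' epi f := by
  have hR' : Function.Involutive (fun p : α × ℝ => (R p.1, p.2)) := fun p => by simp [hR p.1]
  rw [hR'.image_eq_preimage_symm]
  rfl

theorem reflHyp_eq_reflection {n : ℕ} {u : EuclideanSpace ℝ (Fin n)} (hu : ‖u‖ = 1) :
    reflHyp u = (ℝ ∙ u)ᗮ.reflection := by
  funext x
  rw [Submodule.reflection_orthogonal_apply, Submodule.reflection_singleton_apply, hu, reflHyp,
    real_inner_comm]
  simp only [RCLike.ofReal_real_eq_id, id_eq, one_pow, div_one]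
  module

section InfConv

variable {n : ℕ} {f g : EuclideanSpace ℝ (Fin n) → EReal}

theorem add_epi_subset_epi_infConv : epi f + epi g ⊆ epi (infConv f g) := by
  rintro _ ⟨⟨y, s⟩, hys, ⟨z, t⟩, hzt, rfl⟩
  calc infConv f g (y + z) ≤ f y + g (y + z - y) := iInf_le _ y
    _ = f y + g z := by rw [add_sub_cancel_left]
    _ ≤ s + t := add_le_add hys hzt

theorem epi_infConv_subset_add (hf : ∀ x, f x ≠ ⊥) (hg : ∀ x, g x ≠ ⊥)
    (hmin : ∀ x, ∃ y, infConv f g x = f y + g (x - y)) : epi (infConv f g) ⊆ epi f + epi g := by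
  rintro ⟨x, t⟩ (hxt : infConv f g x ≤ t)
  obtain ⟨y, hy⟩ := hmin x
  rw [hy] at hxt
  have hfy : f y ≠ ⊤ := fun h => by
    rw [h, EReal.top_add_of_ne_bot (hg _), top_le_iff] at hxt
    exact EReal.coe_ne_top t hxt
  have hgy : g (x - y) ≠ ⊤ := fun h => by
    rw [h, EReal.add_top_of_ne_bot (hf _), top_le_iff] at hxt
    exact EReal.coe_ne_top t hxt
  obtain ⟨a, ha⟩ : ∃ a : ℝ, f y = a := ⟨_, (EReal.coe_toReal hfy (hf y)).symm⟩
  obtain ⟨b, hb⟩ : ∃ b : ℝ, g (x - y) = b := ⟨_, (EReal.coe_toReal hgy (hg _)).symm⟩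
  rw [ha, hb, ← EReal.coe_add, EReal.coe_le_coe_iff] at hxt
  refine ⟨(y, a), ha.le, (x - y, t - a), ?_, by simp⟩
  change g (x - y) ≤ ((t - a : ℝ) : EReal)
  rw [hb, EReal.coe_le_coe_iff]
  linarith

theorem exists_infConv_eq_add (hf : LowerSemicontinuous f) (hf_bot : ∀ x, f x ≠ ⊥)
    (hf_top : Tendsto f (cocompact _) (𝓝 ⊤)) (hg : LowerSemicontinuous g) {c : ℝ}
    (hc : ∀ x, (c : EReal) ≤ g x) (x : EuclideanSpace ℝ (Fin n)) :
    ∃ y, infConv f g x = f y + g (x - y) := by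
  have hg_bot : ∀ z, g z ≠ ⊥ := fun z => ne_bot_of_le_ne_bot (EReal.coe_ne_bot c) (hc z)
  have hlsc : LowerSemicontinuous fun y => f y + g (x - y) :=
    hf.add' (hg.comp (continuous_const.sub continuous_id))
      fun y => EReal.continuousAt_add (Or.inr (hg_bot _)) (Or.inl (hf_bot y))
  have hbound : Tendsto (fun y => f y + c) (cocompact _) (𝓝 ⊤) := by
    have hadd := EReal.continuousAt_add (p := (⊤, (c : EReal))) (Or.inr (EReal.coe_ne_bot c))
      (Or.inl (by simp))
    have := hadd.tendsto.comp (hf_top.prodMk_nhds tendsto_const_nhds)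
    rwa [EReal.top_add_of_ne_bot (EReal.coe_ne_bot c)] at this
  obtain ⟨y, hy⟩ := hlsc.exists_forall_le_of_tendsto_top
    (tendsto_nhds_top_mono hbound (Eventually.of_forall fun y => add_le_add le_rfl (hc _)))
  exact ⟨y, le_antisymm (iInf_le _ y) (le_iInf hy)⟩

theorem epi_infConv (hf : LowerSemicontinuous f) (hf_bot : ∀ x, f x ≠ ⊥)
    (hf_top : Tendsto f (cocompact _) (𝓝 ⊤)) (hg : LowerSemicontinuous g) {c : ℝ}
    (hc : ∀ x, (c : EReal) ≤ g x) : epi (infConv f g) = epi f + epi g :=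
  (epi_infConv_subset_add hf_bot (fun z => ne_bot_of_le_ne_bot (EReal.coe_ne_bot c) (hc z))
    (exists_infConv_eq_add hf hf_bot hf_top hg hc)).antisymm add_epi_subset_epi_infConv

end InfConv

section EpiMul

variable {n : ℕ} {l : ℝ} {ψ : EuclideanSpace ℝ (Fin n) → EReal}

theorem epi_epiMul (hl : 0 < l) : epi (epiMul l ψ) = l • epi ψ := by
  ext ⟨x, t⟩
  rw [mem_smul_set_iff_inv_smul_mem₀ hl.ne']
  exact EReal.coe_mul_le_coe_iff hl

theorem epiMul_ne_bot (hl : 0 < l) (hψ : ∀ x, ψ x ≠ ⊥) (x : EuclideanSpace ℝ (Fin n)) :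
    epiMul l ψ x ≠ ⊥ :=
  (EReal.mul_ne_bot _ _).2 ⟨Or.inl (EReal.coe_ne_bot l), Or.inr (hψ _),
    Or.inl (EReal.coe_ne_top l), Or.inl (EReal.coe_nonneg.2 hl.le)⟩

theorem LowerSemicontinuous.epiMul (hl : 0 < l) (hψ : LowerSemicontinuous ψ) :
    LowerSemicontinuous (epiMul l ψ) :=
  (EReal.continuous_coe_mul hl.ne').comp_lowerSemicontinuous (hψ.comp (continuous_const_smul l⁻¹))
    fun _ _ h => mul_le_mul_of_nonneg_left h (EReal.coe_nonneg.2 hl.le)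

theorem tendsto_epiMul_cocompact (hl : 0 < l) (hψ : Tendsto ψ (cocompact _) (𝓝 ⊤)) :
    Tendsto (epiMul l ψ) (cocompact _) (𝓝 ⊤) := by
  have hsmul := (Homeomorph.smulOfNeZero l⁻¹ (inv_ne_zero hl.ne')
    (α := EuclideanSpace ℝ (Fin n))).map_cocompact.le
  have := (EReal.continuous_coe_mul hl.ne').continuousAt.tendsto.comp (hψ.comp hsmul)
  rwa [EReal.coe_mul_top_of_pos hl] at this

end EpiMul

theorem epi_minkSymm_general {n : ℕ} (u : EuclideanSpace ℝ (Fin n)) (hu : ‖u‖ = 1)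
    (ψ : EuclideanSpace ℝ (Fin n) → EReal)
    (hlsc : LowerSemicontinuous ψ)
    (hbot : ∀ x, ψ x ≠ ⊥)
    (hcoercive : ∀ M : ℝ, ∃ r : ℝ, ∀ x, r ≤ ‖x‖ → (M : EReal) ≤ ψ x) :
    {p : EuclideanSpace ℝ (Fin n) × ℝ | minkSymm u ψ p.1 ≤ (p.2 : EReal)} =
      (1/2 : ℝ) • {p : EuclideanSpace ℝ (Fin n) × ℝ | ψ p.1 ≤ (p.2 : EReal)} +
        (1/2 : ℝ) • ((fun p : EuclideanSpace ℝ (Fin n) × ℝ => (reflHyp u p.1, p.2)) ''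
          {p : EuclideanSpace ℝ (Fin n) × ℝ | ψ p.1 ≤ (p.2 : EReal)}) := by
  have hhalf : (0 : ℝ) < 1 / 2 := one_half_pos
  have hψ_top := tendsto_cocompact_nhds_top_of_forall_norm_ge hcoercive
  set R := (ℝ ∙ u)ᗮ.reflection
  have hR : reflHyp u = R := reflHyp_eq_reflection hu
  have hR_inv : Function.Involutive (reflHyp u) := hR ▸ Submodule.reflection_involutive _
  have hψR_lsc : LowerSemicontinuous fun y => ψ (reflHyp u y) := hR ▸ hlsc.comp R.continuous
  have hψR_top : Tendsto (fun y => ψ (reflHyp u y)) (cocompact _) (𝓝 ⊤) :=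
    hR ▸ hψ_top.comp R.toHomeomorph.map_cocompact.le
  obtain ⟨c, hc⟩ := (hψR_lsc.epiMul hhalf).exists_forall_coe_le
    (epiMul_ne_bot hhalf fun y => hbot _) (tendsto_epiMul_cocompact hhalf hψR_top)
  change epi (minkSymm u ψ) = _
  rw [minkSymm, epi_infConv (hlsc.epiMul hhalf) (epiMul_ne_bot hhalf hbot)
    (tendsto_epiMul_cocompact hhalf hψ_top) (hψR_lsc.epiMul hhalf) hc, epi_epiMul hhalf,
    epi_epiMul hhalf, epi_comp_of_involutive hR_inv]
  rfl

theorem epi_minkSymm {n : ℕ} (u : EuclideanSpace ℝ (Fin n)) (hu : ‖u‖ = 1)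
    (ψ : EuclideanSpace ℝ (Fin n) → EReal)
    (hconv : ∀ x y : EuclideanSpace ℝ (Fin n), ∀ a b : ℝ, 0 ≤ a → 0 ≤ b → a + b = 1 →
      ψ (a • x + b • y) ≤ (a : EReal) * ψ x + (b : EReal) * ψ y)
    (hlsc : LowerSemicontinuous ψ)
    (hproper : ∃ x, ψ x ≠ ⊤) (hbot : ∀ x, ψ x ≠ ⊥)
    (hcoercive : ∀ M : ℝ, ∃ r : ℝ, ∀ x, r ≤ ‖x‖ → (M : EReal) ≤ ψ x) :
    {p : EuclideanSpace ℝ (Fin n) × ℝ | minkSymm u ψ p.1 ≤ (p.2 : EReal)} =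
      (1/2 : ℝ) • {p : EuclideanSpace ℝ (Fin n) × ℝ | ψ p.1 ≤ (p.2 : EReal)} +
        (1/2 : ℝ) • ((fun p : EuclideanSpace ℝ (Fin n) × ℝ => (reflHyp u p.1, p.2)) ''
          {p : EuclideanSpace ℝ (Fin n) × ℝ | ψ p.1 ≤ (p.2 : EReal)}) :=
  epi_minkSymm_general u hu ψ hlsc hbot hcoercive
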